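/- arXiv:2502.20591 — 2 statements merged into one kernel-verified Lean document; each statement's English description precedes it below -/
import Mathlib

section
/- Let A and B be finite-dimensional unital C*-algebras over ℂ and let γ be an ℝ-linear, spectrum-preserving map from the self-adjoint elements of A to the self-adjoint elements of B. Then γ is a Jordan homomorphism: for all self-adjoint a, b ∈ A one has γ(a·b + b·a) = γ(a)·γ(b) + γ(b)·γ(a) (and in particular γ(a²) = γ(a)²), where a·b + b·a is again self-adjoint. -/
/-!
In finite dimension a self-adjoint `a` has finite spectrum `σ`, so `a = ∑ t ∈ σ, t • e t` with
the spectral projections `e t`, which are orthogonal idempotents; hence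
`a ^ 2 = ∑ t ∈ σ, t ^ 2 • e t`.
Since a self-adjoint element is idempotent iff its spectrum lies in `{0, 1}`, a
spectrum-preserving additive map `γ` sends each `e t`, and each `e t + e u`, to an idempotent;
hence the `γ (e t)` are again orthogonal idempotents and `γ (a ^ 2) = γ a ^ 2`.
Polarization turns this into the Jordan identity.
-/

/-- The Jordan product `a*b + b*a` of two self-adjoint elements is self-adjoint. -/
def selfAdjoint.jordan {A : Type*} [Ring A] [StarRing A]
    (a b : selfAdjoint A) : selfAdjoint A :=
  ⟨(a : A) * b + (b : A) * a, by
    have ha := selfAdjoint.mem_iff.mp a.2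
    have hb := selfAdjoint.mem_iff.mp b.2
    simp only [selfAdjoint.mem_iff, star_add, star_mul, ha, hb]
    exact add_comm _ _⟩

open Polynomial in
theorem spectrum.finite_of_finiteDimensional (𝕜 : Type*) {A : Type*} [Field 𝕜] [Ring A]
    [Algebra 𝕜 A] [FiniteDimensional 𝕜 A] (a : A) : (spectrum 𝕜 a).Finite := by
  nontriviality A
  refine (finite_setOfPred_isRoot (minpoly.ne_zero (.of_finite 𝕜 a))).subset fun t ht => ?_
  simpa using spectrum.subset_polynomial_aeval a (minpoly 𝕜 a) ⟨t, ht, rfl⟩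

theorem OrthogonalIdempotents.sum_smul_sq {R S I : Type*} [CommSemiring R] [Semiring S]
    [Algebra R S] {e : I → S} (he : OrthogonalIdempotents e) (s : Finset I) (c : I → R) :
    (∑ i ∈ s, c i • e i) ^ 2 = ∑ i ∈ s, c i ^ 2 • e i := by
  classical
  simp [pow_two, Finset.sum_mul_sum, he.mul_eq, smul_smul]

theorem IsIdempotentElem.mul_eq_zero_of_add {R : Type*} [Ring R] [IsAddTorsionFree R] {p q : R}
    (hp : IsIdempotentElem p) (hq : IsIdempotentElem q) (hpq : IsIdempotentElem (p + q)) :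
    p * q = 0 :=
  hp.mul_eq_zero_of_anticommute ((hp.add_iff hq).mp hpq)

namespace selfAdjoint

variable {A : Type*} [Ring A] [StarRing A] [Algebra ℝ A] [TopologicalSpace A]
  [ContinuousFunctionalCalculus ℝ A IsSelfAdjoint]

/-- Only meaningful when `t` is isolated in the spectrum (e.g. the spectrum is finite): otherwise
the indicator is discontinuous there and `cfc` returns the junk value `0`. -/
noncomputable def spectralProjection (a : selfAdjoint A) (t : ℝ) : selfAdjoint A :=
  ⟨cfc (fun s : ℝ => if s = t then (1 : ℝ) else 0) (a : A), cfc_predicate _ _⟩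

theorem orthogonalIdempotents_spectralProjection {a : selfAdjoint A}
    (ha : (spectrum ℝ (a : A)).Finite) :
    OrthogonalIdempotents fun t => (spectralProjection a t : A) := by
  classical
  refine OrthogonalIdempotents.iff_mul_eq.mpr fun t u => ?_
  simp only [spectralProjection]
  rw [← cfc_mul _ _ _ (ha.continuousOn _) (ha.continuousOn _)]
  split_ifs with htu
  · subst htu
    exact cfc_congr fun s _ => by split_ifs <;> simp
  · refine (cfc_congr fun s _ => ?_).trans (cfc_zero ℝ (a : A))
    split_ifs <;> simp_all

theorem sum_smul_spectralProjection [StarModule ℝ A] {a : selfAdjoint A}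
    (ha : (spectrum ℝ (a : A)).Finite) :
    ∑ t ∈ ha.toFinset, t • spectralProjection a t = a := by
  ext
  simp only [AddSubgroup.val_finsetSum, val_smul, spectralProjection]
  rw [Finset.sum_congr rfl fun t _ => (cfc_smul t _ (a : A) (ha.continuousOn _)).symm,
    ← cfc_sum _ _ _ fun t _ => ha.continuousOn _]
  conv_rhs => rw [← cfc_id' ℝ (a : A)]
  refine cfc_congr fun s hs => ?_
  simp [Finset.sum_apply, hs]

end selfAdjoint

theorem IsIdempotentElem.of_spectrum_eq {A B : Type*} [Ring A] [Algebra ℝ A] [Ring B] [StarRing B]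
    [Algebra ℝ B] [TopologicalSpace B] [ContinuousFunctionalCalculus ℝ B IsSelfAdjoint]
    {x : B} {p : A} (hx : IsSelfAdjoint x) (hp : IsIdempotentElem p)
    (h : spectrum ℝ x = spectrum ℝ p) : IsIdempotentElem x :=
  (isIdempotentElem_iff_spectrum_subset ℝ x hx).mpr (h ▸ hp.spectrum_subset ℝ)

section SpectrumPreserving

variable {A B : Type*} [Ring A] [StarRing A] [Algebra ℝ A]
  [Ring B] [StarRing B] [Algebra ℝ B] [TopologicalSpace B]
  [ContinuousFunctionalCalculus ℝ B IsSelfAdjoint]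

theorem OrthogonalIdempotents.map_of_spectrum_eq {I : Type*} (f : selfAdjoint A →+ selfAdjoint B)
    (hf : ∀ a, spectrum ℝ (f a : B) = spectrum ℝ (a : A)) {e : I → selfAdjoint A}
    (he : OrthogonalIdempotents fun i => (e i : A)) :
    OrthogonalIdempotents fun i => (f (e i) : B) := by
  have hidem {p : selfAdjoint A} (hp : IsIdempotentElem (p : A)) : IsIdempotentElem (f p : B) :=
    .of_spectrum_eq (f p).2 hp (hf p)
  have : IsAddTorsionFree B := .of_isTorsionFree ℝ B
  refine ⟨fun i => hidem (he.idem i), fun i j hij => ?_⟩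
  have hsum : IsIdempotentElem ((e i + e j : selfAdjoint A) : A) :=
    (he.idem i).add (he.idem j) (by simp [he.ortho hij, he.ortho hij.symm])
  refine (hidem (he.idem i)).mul_eq_zero_of_add (hidem (he.idem j)) ?_
  simpa using hidem hsum

theorem selfAdjoint.map_sq_of_spectrum_eq [StarModule ℝ A] [StarModule ℝ B]
    [TopologicalSpace A] [ContinuousFunctionalCalculus ℝ A IsSelfAdjoint]
    (f : selfAdjoint A →ₗ[ℝ] selfAdjoint B)
    (hf : ∀ a, spectrum ℝ (f a : B) = spectrum ℝ (a : A)) {a : selfAdjoint A}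
    (ha : (spectrum ℝ (a : A)).Finite) : (f (a ^ 2) : B) = (f a : B) ^ 2 := by
  have he := orthogonalIdempotents_spectralProjection ha
  have hfe := he.map_of_spectrum_eq f.toAddMonoidHom hf
  have hsq : a ^ 2 = ∑ t ∈ ha.toFinset, t ^ 2 • spectralProjection a t := by
    ext
    simpa [← he.sum_smul_sq] using congrArg (fun x : selfAdjoint A => (x : A) ^ 2)
      (sum_smul_spectralProjection ha).symm
  calc (f (a ^ 2) : B) = ∑ t ∈ ha.toFinset, t ^ 2 • (f (spectralProjection a t) : B) := by
        simp [hsq]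
    _ = (∑ t ∈ ha.toFinset, t • (f (spectralProjection a t) : B)) ^ 2 :=
        (hfe.sum_smul_sq _ _).symm
    _ = (f a : B) ^ 2 := by
        conv_rhs => rw [← sum_smul_spectralProjection ha]
        simp

end SpectrumPreserving

namespace selfAdjoint

theorem jordan_eq {A : Type*} [Ring A] [StarRing A] (a b : selfAdjoint A) :
    jordan a b = (a + b) ^ 2 - a ^ 2 - b ^ 2 := by
  ext
  simp only [jordan, AddSubgroup.coe_sub, AddSubgroup.coe_add, val_pow]
  noncomm_ring

theorem map_jordan_of_map_sq {A B : Type*} [Ring A] [StarRing A] [Ring B] [StarRing B]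
    (f : selfAdjoint A →+ selfAdjoint B) (hf : ∀ a, (f (a ^ 2) : B) = (f a : B) ^ 2)
    (a b : selfAdjoint A) : (f (jordan a b) : B) = f a * f b + f b * f a := by
  rw [jordan_eq, map_sub, map_sub, AddSubgroup.coe_sub, AddSubgroup.coe_sub, hf, hf, hf, map_add,
    AddSubgroup.coe_add]
  noncomm_ring

end selfAdjoint

theorem spectrum_preserving_map_is_jordan_homomorphism_general
    {A B : Type*}
    [NormedRing A] [StarRing A] [CStarRing A] [NormedAlgebra ℂ A] [StarModule ℂ A]
    [CompleteSpace A] [FiniteDimensional ℂ A]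
    [NormedRing B] [StarRing B] [CStarRing B] [NormedAlgebra ℂ B] [StarModule ℂ B]
    [CompleteSpace B]
    (γ : selfAdjoint A → selfAdjoint B)
    (hadd : ∀ a b : selfAdjoint A, γ (a + b) = γ a + γ b)
    (hsmul : ∀ (r : ℝ) (a : selfAdjoint A), γ (r • a) = r • γ a)
    (hspec : ∀ a : selfAdjoint A, spectrum ℝ ((γ a : B)) = spectrum ℝ ((a : A))) :
    ∀ a b : selfAdjoint A,
      (γ (selfAdjoint.jordan a b) : B) = (γ a : B) * (γ b : B) + (γ b : B) * (γ a : B) := by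
  let _ : CStarAlgebra A := {}
  let _ : CStarAlgebra B := {}
  have : FiniteDimensional ℝ A := .trans ℝ ℂ A
  let f : selfAdjoint A →ₗ[ℝ] selfAdjoint B :=
    { toFun := γ, map_add' := hadd, map_smul' := hsmul }
  exact selfAdjoint.map_jordan_of_map_sq f.toAddMonoidHom fun a =>
    selfAdjoint.map_sq_of_spectrum_eq f hspec (spectrum.finite_of_finiteDimensional ℝ _)

/-- An `ℝ`-linear, spectrum-preserving map between the self-adjoint
parts of finite-dimensional unital C*-algebras is a Jordan homomorphism. -/
theorem spectrum_preserving_map_is_jordan_homomorphism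
    {A B : Type*}
    [NormedRing A] [StarRing A] [CStarRing A] [NormedAlgebra ℂ A] [StarModule ℂ A]
    [CompleteSpace A] [FiniteDimensional ℂ A]
    [NormedRing B] [StarRing B] [CStarRing B] [NormedAlgebra ℂ B] [StarModule ℂ B]
    [CompleteSpace B] [FiniteDimensional ℂ B]
    (γ : selfAdjoint A → selfAdjoint B)
    (hadd : ∀ a b : selfAdjoint A, γ (a + b) = γ a + γ b)
    (hsmul : ∀ (r : ℝ) (a : selfAdjoint A), γ (r • a) = r • γ a)
    (hspec : ∀ a : selfAdjoint A, spectrum ℝ ((γ a : B)) = spectrum ℝ ((a : A))) :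
    ∀ a b : selfAdjoint A,
      (γ (selfAdjoint.jordan a b) : B) = (γ a : B) * (γ b : B) + (γ b : B) * (γ a : B) :=
  spectrum_preserving_map_is_jordan_homomorphism_general γ hadd hsmul hspec
end

section
/- Let n ≥ 1 and let Γ : M_n(ℂ) → M_m(ℂ) be a unital real star ring homomorphism. Then there exist p, q ∈ ℕ with (p + q)·n = m and a unitary U ∈ M_m(ℂ) such that for all α ∈ M_n(ℂ), Γ(α) = U · D(α) · Uᴴ, where D(α) ∈ M_m(ℂ) is the block-diagonal matrix whose diagonal blocks are p copies of α followed by q copies of the entrywise complex conjugate ᾱ, regarded as an m×m matrix via an identification of (Fin p ⊕ Fin q) × Fin n with Fin m. -/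
open Matrix in
/-- A unital real star ring homomorphism between complex matrix algebras. -/
def IsUnitalRealStarRingHom {n m : ℕ}
    (Γ : Matrix (Fin n) (Fin n) ℂ → Matrix (Fin m) (Fin m) ℂ) : Prop :=
  (∀ α β, Γ (α + β) = Γ α + Γ β) ∧
  (∀ α β, Γ (α * β) = Γ α * Γ β) ∧
  Γ 1 = 1 ∧
  (∀ (r : ℝ) (α), Γ (r • α) = r • Γ α) ∧
  (∀ α, Γ αᴴ = (Γ α)ᴴ)

/-!
Let `J = Γ(i • 1)`. It commutes with the image of `Γ`, `J² = -1` and `Jᴴ = -J`, so the range of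
the projection `Γ(E_zz)` splits orthogonally into the `±i`-eigenspaces of `J`, and on the
`σ(i)`-eigenspace (`σ` the identity or complex conjugation) `α ↦ Γ(α) v` is `σ`-semilinear.
For orthonormal bases `(v_s)` of the two eigenspaces, the vectors `Γ(E_tz) v_s` form an
orthonormal basis of `ℂ^m` (the usual matrix-unit argument), and in it `Γ(α)` is block diagonal
with blocks `α` on the `+i` part and `ᾱ` on the `-i` part.
-/

open Matrix Submodule Set
open scoped InnerProductSpace

def IsUnitalRealStarRingHom.toStarAlgHom {n m : ℕ}
    {Γ : Matrix (Fin n) (Fin n) ℂ → Matrix (Fin m) (Fin m) ℂ}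
    (hΓ : IsUnitalRealStarRingHom Γ) :
    Matrix (Fin n) (Fin n) ℂ →⋆ₐ[ℝ] Matrix (Fin m) (Fin m) ℂ where
  toFun := Γ
  map_one' := hΓ.2.2.1
  map_mul' := hΓ.2.1
  map_zero' := by simpa using hΓ.2.2.2.1 0 0
  map_add' := hΓ.1
  commutes' r := by simpa [Algebra.algebraMap_eq_smul_one, hΓ.2.2.1] using hΓ.2.2.2.1 r 1
  map_star' := hΓ.2.2.2.2

theorem Matrix.mul_single_one_eq_sum {ι R : Type*} [Fintype ι] [DecidableEq ι] [Semiring R]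
    (α : Matrix ι ι R) (t z : ι) : α * single t z 1 = ∑ t', α t' t • single t' z 1 := by
  ext i j
  simp [mul_apply, Matrix.sum_apply, single_apply, ite_and]

theorem Submodule.coe_mem_span_range_coe {R M S : Type*} [Semiring R] [AddCommMonoid M]
    [Module R M] {W : Submodule R M} (b : Module.Basis S R W) (w : W) :
    (w : M) ∈ span R (range fun i => (b i : M)) := by
  rw [show (fun i => (b i : M)) = W.subtype ∘ b from rfl, range_comp]
  simpa using apply_mem_span_image_of_mem_span W.subtype (b.mem_span w)

namespace MatrixRealStarRep

section
variable {ι H : Type*} [Fintype ι] [DecidableEq ι]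
  [NormedAddCommGroup H] [InnerProductSpace ℂ H] [CompleteSpace H]
  (ρ : Matrix ι ι ℂ →⋆ₐ[ℝ] (H →L[ℂ] H))

noncomputable def imagUnit : H →L[ℂ] H := ρ (Complex.I • 1)

lemma map_I_smul (α : Matrix ι ι ℂ) : ρ (Complex.I • α) = imagUnit ρ * ρ α := by
  rw [imagUnit, ← map_mul, smul_one_mul]

lemma commute_imagUnit (α : Matrix ι ι ℂ) : Commute (imagUnit ρ) (ρ α) := by
  rw [Commute, SemiconjBy, imagUnit, ← map_mul, ← map_mul, smul_one_mul, mul_smul_one]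

lemma imagUnit_mul_self : imagUnit ρ * imagUnit ρ = -1 := by
  rw [imagUnit, ← map_mul, smul_one_mul, smul_smul, Complex.I_mul_I, neg_one_smul, map_neg,
    map_one]

lemma star_imagUnit : star (imagUnit ρ) = -imagUnit ρ := by
  rw [imagUnit, ← map_star, star_smul, star_one, Complex.star_def, Complex.conj_I, neg_smul,
    map_neg]

lemma map_smul_apply_of_imagUnit_apply {σ : ℂ →ₐ[ℝ] ℂ} {v : H}
    (hv : imagUnit ρ v = σ Complex.I • v) (c : ℂ) (α : Matrix ι ι ℂ) :
    ρ (c • α) v = σ c • ρ α v := by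
  have hc : c • α = c.re • α + c.im • (Complex.I • α) := by
    rw [← Complex.coe_smul c.re, ← Complex.coe_smul c.im, smul_smul, ← add_smul,
      Complex.re_add_im]
  have hσ : σ c = c.re + c.im * σ Complex.I := by
    conv_lhs => rw [← Complex.re_add_im c]
    simp [map_add, map_mul, ← Complex.coe_algebraMap, AlgHom.commutes]
  rw [hc, map_add, map_smul, map_smul, map_I_smul, (commute_imagUnit ρ α).eq, _root_.add_apply,
    _root_.smul_apply, _root_.smul_apply, mul_apply_eq_comp, hv, map_smul, hσ, add_smul, mul_smul,
    Complex.coe_smul, Complex.coe_smul]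

lemma inner_eq_zero_of_imagUnit_apply {v w : H} (hv : imagUnit ρ v = Complex.I • v)
    (hw : imagUnit ρ w = -Complex.I • w) : ⟪v, w⟫_ℂ = 0 := by
  have h : ⟪imagUnit ρ v, w⟫_ℂ = ⟪v, -imagUnit ρ w⟫_ℂ := by
    rw [← _root_.neg_apply, ← star_imagUnit, ContinuousLinearMap.star_eq_adjoint,
      ContinuousLinearMap.adjoint_inner_right]
  rw [hv, hw, inner_smul_left, ← neg_smul, neg_neg, inner_smul_right, Complex.conj_I] at h
  have : (2 * Complex.I) * ⟪v, w⟫_ℂ = 0 := by linear_combination -h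
  simpa [Complex.I_ne_zero] using this

lemma map_single_mul_map_single (a b c d : ι) :
    ρ (single a b 1) * ρ (single c d 1) = if b = c then ρ (single a d 1) else 0 := by
  split_ifs with h
  · rw [h, ← map_mul, single_mul_single_same, one_mul]
  · rw [← map_mul, single_mul_single_of_ne _ _ _ _ h, map_zero]

lemma star_map_single (a b : ι) : star (ρ (single a b 1)) = ρ (single b a 1) := by
  rw [← map_star, star_eq_conjTranspose, conjTranspose_single, star_one]

lemma inner_map_single_apply (a b c d : ι) (x y : H) :
    ⟪ρ (single a b 1) x, ρ (single c d 1) y⟫_ℂ =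
      if a = c then ⟪x, ρ (single b d 1) y⟫_ℂ else 0 := by
  rw [← ContinuousLinearMap.adjoint_inner_right, ← ContinuousLinearMap.star_eq_adjoint,
    star_map_single, ← mul_apply_eq_comp, map_single_mul_map_single]
  split_ifs <;> simp

variable (z : ι)

lemma map_apply_map_single_apply {σ : ℂ →ₐ[ℝ] ℂ} {v : H}
    (hv : imagUnit ρ v = σ Complex.I • v) (α : Matrix ι ι ℂ) (t : ι) :
    ρ α (ρ (single t z 1) v) = ∑ t', σ (α t' t) • ρ (single t' z 1) v := by
  rw [← mul_apply_eq_comp, ← map_mul, Matrix.mul_single_one_eq_sum, map_sum, _root_.sum_apply]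
  exact Finset.sum_congr rfl fun t' _ => map_smul_apply_of_imagUnit_apply ρ hv _ _

lemma orthonormal_map_single_apply {S : Type*} {v : S → H} (hv : Orthonormal ℂ v)
    (hvF : ∀ s, ρ (single z z 1) (v s) = v s) :
    Orthonormal ℂ fun x : S × ι => ρ (single x.2 z 1) (v x.1) := by
  classical
  rw [orthonormal_iff_ite] at hv ⊢
  rintro ⟨s, t⟩ ⟨s', t'⟩
  rw [inner_map_single_apply, hvF, hv]
  simp only [Prod.mk.injEq, ← ite_and, and_comm]

lemma span_map_single_apply_eq_top {S : Type*} {v : S → H}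
    (hv : ∀ w, ρ (single z z 1) w = w → w ∈ span ℂ (range v)) :
    ⊤ ≤ span ℂ (range fun x : S × ι => ρ (single x.2 z 1) (v x.1)) := by
  intro x _
  have hx : x = ∑ t, ρ (single t z 1) (ρ (single z t 1) x) := by
    have h1 : ∑ t, ρ (single t z 1) * ρ (single z t 1) = 1 := by
      simp only [map_single_mul_map_single, if_true]
      rw [← map_sum, sum_single_one, map_one]
    calc x = (∑ t, ρ (single t z 1) * ρ (single z t 1)) x := by rw [h1]; rfl
      _ = _ := by rw [_root_.sum_apply]; rfl
  rw [hx]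
  refine sum_mem fun t _ => ?_
  have hmem := hv (ρ (single z t 1) x) <| by
    rw [← mul_apply_eq_comp, map_single_mul_map_single, if_pos rfl]
  refine span_mono ?_ (apply_mem_span_image_of_mem_span (ρ (single t z 1)).toLinearMap hmem)
  rintro _ ⟨_, ⟨s, rfl⟩, rfl⟩
  exact ⟨(s, t), rfl⟩

lemma inner_map_apply_eq_blockDiagonal {S : Type*} [DecidableEq S] {σ : S → ℂ →ₐ[ℝ] ℂ}
    {v : S → H} (hv : Orthonormal ℂ v) (hvF : ∀ s, ρ (single z z 1) (v s) = v s)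
    (hvJ : ∀ s, imagUnit ρ (v s) = σ s Complex.I • v s) (α : Matrix ι ι ℂ) (x y : S × ι) :
    ⟪ρ (single x.2 z 1) (v x.1), ρ α (ρ (single y.2 z 1) (v y.1))⟫_ℂ =
      blockDiagonal (fun s => α.map (σ s)) x.swap y.swap := by
  obtain ⟨s, t⟩ := x
  obtain ⟨s', t'⟩ := y
  have hu (t'' : ι) : ⟪ρ (single t z 1) (v s), ρ (single t'' z 1) (v s')⟫_ℂ =
      if s = s' ∧ t = t'' then 1 else 0 := by
    simpa using orthonormal_iff_ite.mp (orthonormal_map_single_apply ρ z hv hvF) (s, t) (s', t'')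
  rw [map_apply_map_single_apply ρ z (hvJ s'), inner_sum, Prod.swap_prod_mk,
    Prod.swap_prod_mk, blockDiagonal_apply]
  simp only [inner_smul_right, hu]
  by_cases h : s = s'
  · subst h
    simp
  · simp [h]

end

section
variable {ι H : Type*} [Fintype ι] [DecidableEq ι]
  [NormedAddCommGroup H] [InnerProductSpace ℂ H] [FiniteDimensional ℂ H]
  (ρ : Matrix ι ι ℂ →⋆ₐ[ℝ] (H →L[ℂ] H)) (z : ι)

noncomputable def idOrConj {α β : Type*} : α ⊕ β → ℂ →ₐ[ℝ] ℂ :=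
  Sum.elim (fun _ => AlgHom.id ℝ ℂ) fun _ => Complex.conjAe.toAlgHom

noncomputable def fixedEigenspace (μ : ℂ) : Submodule ℂ H :=
  LinearMap.ker ((ρ (single z z 1) - 1 : H →L[ℂ] H) : H →ₗ[ℂ] H) ⊓
    LinearMap.ker ((imagUnit ρ - μ • 1 : H →L[ℂ] H) : H →ₗ[ℂ] H)

lemma mem_fixedEigenspace {μ : ℂ} {w : H} :
    w ∈ fixedEigenspace ρ z μ ↔ ρ (single z z 1) w = w ∧ imagUnit ρ w = μ • w := by
  simp [fixedEigenspace, sub_eq_zero]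

lemma mem_fixedEigenspace_sup {w : H} (hw : ρ (single z z 1) w = w) :
    w ∈ fixedEigenspace ρ z Complex.I ⊔ fixedEigenspace ρ z (-Complex.I) := by
  have hJJ : imagUnit ρ (imagUnit ρ w) = -w := by
    rw [← mul_apply_eq_comp, imagUnit_mul_self, _root_.neg_apply, one_apply_eq_self]
  have hFJ : ρ (single z z 1) (imagUnit ρ w) = imagUnit ρ w := by
    rw [← mul_apply_eq_comp, ← (commute_imagUnit ρ _).eq, mul_apply_eq_comp, hw]
  refine mem_sup.mpr ⟨(2⁻¹ : ℂ) • (w - Complex.I • imagUnit ρ w), ?_,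
    (2⁻¹ : ℂ) • (w + Complex.I • imagUnit ρ w), ?_, by module⟩ <;>
  · simp only [mem_fixedEigenspace, map_smul, map_sub, map_add, hw, hFJ, hJJ, true_and]
    match_scalars <;> first | ring1 | linear_combination (2⁻¹ : ℂ) * Complex.I_mul_I

lemma exists_orthonormal_fixed_eigenvectors :
    ∃ (p q : ℕ) (v : Fin p ⊕ Fin q → H), Orthonormal ℂ v ∧
      (∀ s, ρ (single z z 1) (v s) = v s) ∧
      (∀ s, imagUnit ρ (v s) = idOrConj s Complex.I • v s) ∧
      ∀ w, ρ (single z z 1) w = w → w ∈ span ℂ (range v) := by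
  let bp := stdOrthonormalBasis ℂ (fixedEigenspace ρ z Complex.I)
  let bm := stdOrthonormalBasis ℂ (fixedEigenspace ρ z (-Complex.I))
  have hbp (i) := (mem_fixedEigenspace ρ z).mp (bp i).2
  have hbm (i) := (mem_fixedEigenspace ρ z).mp (bm i).2
  refine ⟨_, _, Sum.elim (fun i => (bp i : H)) fun i => (bm i : H), ?_, ?_, ?_, ?_⟩
  · rw [orthonormal_iff_ite]
    have hp := orthonormal_iff_ite.mp bp.orthonormal
    have hm := orthonormal_iff_ite.mp bm.orthonormal
    rintro (i | i) (j | j)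
    · simpa [← coe_inner] using hp i j
    · simpa using inner_eq_zero_of_imagUnit_apply ρ (hbp i).2 (hbm j).2
    · simpa [inner_eq_zero_symm] using inner_eq_zero_of_imagUnit_apply ρ (hbp j).2 (hbm i).2
    · simpa [← coe_inner] using hm i j
  · rintro (i | i)
    exacts [(hbp i).1, (hbm i).1]
  · rintro (i | i)
    · simpa [idOrConj] using (hbp i).2
    · simpa [idOrConj] using (hbm i).2
  · intro w hw
    obtain ⟨wp, hwp, wm, hwm, rfl⟩ := mem_sup.mp (mem_fixedEigenspace_sup ρ z hw)
    rw [Set.Sum.elim_range, span_union]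
    exact add_mem_sup (coe_mem_span_range_coe bp.toBasis ⟨wp, hwp⟩)
      (coe_mem_span_range_coe bm.toBasis ⟨wm, hwm⟩)

theorem exists_orthonormalBasis_inner_eq_blockDiagonal [Nonempty ι] :
    ∃ (p q : ℕ) (b : OrthonormalBasis ((Fin p ⊕ Fin q) × ι) ℂ H),
      ∀ α x y, ⟪b x, ρ α (b y)⟫_ℂ =
        blockDiagonal (Sum.elim (fun _ => α) fun _ => α.map (starRingEnd ℂ)) x.swap y.swap := by
  inhabit ι
  obtain ⟨p, q, v, hv, hvF, hvJ, hspan⟩ := exists_orthonormal_fixed_eigenvectors ρ default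
  refine ⟨p, q, .mk (orthonormal_map_single_apply ρ _ hv hvF)
    (span_map_single_apply_eq_top ρ _ hspan), fun α x y => ?_⟩
  rw [OrthonormalBasis.coe_mk, inner_map_apply_eq_blockDiagonal ρ _ hv hvF hvJ]
  congr
  ext (s | s) <;> rfl

end
end MatrixRealStarRep

theorem Matrix.eq_mul_mul_conjTranspose_of_inner {𝕜 κ : Type*} [RCLike 𝕜] [Fintype κ]
    [DecidableEq κ]
    {A M : Matrix κ κ 𝕜} (b : OrthonormalBasis κ 𝕜 (EuclideanSpace 𝕜 κ))
    (h : ∀ i j, ⟪b i, toEuclideanCLM (n := κ) (𝕜 := 𝕜) A (b j)⟫_𝕜 = M i j) :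
    A = (EuclideanSpace.basisFun κ 𝕜).toBasis.toMatrix b.toBasis * M *
      ((EuclideanSpace.basisFun κ 𝕜).toBasis.toMatrix b.toBasis)ᴴ := by
  set U := (EuclideanSpace.basisFun κ 𝕜).toBasis.toMatrix b.toBasis
  have hM : M = Uᴴ * A * U := by
    ext i j
    rw [← h]
    have hU (k l : κ) : U k l = b l k := rfl
    simp only [EuclideanSpace.inner_eq_star_dotProduct, ofLp_toEuclideanCLM, dotProduct, mulVec,
      mul_apply, conjTranspose_apply, hU, Pi.star_apply, Finset.sum_mul]
    rw [Finset.sum_comm]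
    exact Finset.sum_congr rfl fun _ _ => Finset.sum_congr rfl fun _ _ => by ring
  have hU : U * Uᴴ = 1 :=
    (EuclideanSpace.basisFun κ 𝕜).toMatrix_orthonormalBasis_self_mul_conjTranspose b
  rw [hM, ← mul_assoc, ← mul_assoc, hU, one_mul, mul_assoc, hU, mul_one]

open MatrixRealStarRep in
theorem StarAlgHom.exists_unitary_eq_conj_blockDiagonal {ι κ : Type*} [Fintype ι]
    [DecidableEq ι] [Nonempty ι] [Fintype κ] [DecidableEq κ]
    (φ : Matrix ι ι ℂ →⋆ₐ[ℝ] Matrix κ κ ℂ) :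
    ∃ (p q : ℕ), ∃ U ∈ unitaryGroup κ ℂ, ∃ e : (Fin p ⊕ Fin q) × ι ≃ κ, ∀ α,
      φ α = U * reindex ((Equiv.prodComm ι (Fin p ⊕ Fin q)).trans e)
        ((Equiv.prodComm ι (Fin p ⊕ Fin q)).trans e)
        (blockDiagonal (Sum.elim (fun _ => α) fun _ => α.map (starRingEnd ℂ))) * Uᴴ := by
  obtain ⟨p, q, b, hb⟩ := exists_orthonormalBasis_inner_eq_blockDiagonal
    (((toEuclideanCLM (𝕜 := ℂ) (n := κ)).toStarAlgHom.restrictScalars ℝ).comp φ)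
  let e := b.toBasis.indexEquiv (EuclideanSpace.basisFun κ ℂ).toBasis
  have hU :=
    (EuclideanSpace.basisFun κ ℂ).toMatrix_orthonormalBasis_mem_unitary (b.reindex e)
  refine ⟨p, q, _, hU, e, fun α => ?_⟩
  refine eq_mul_mul_conjTranspose_of_inner (A := φ α) (b.reindex e) fun i j => ?_
  rw [OrthonormalBasis.reindex_apply, OrthonormalBasis.reindex_apply, reindex_apply,
    submatrix_apply]
  exact hb α (e.symm i) (e.symm j)

open Matrix in
/-- a unital real star ring homomorphism between complex matrix
algebras is unitarily equivalent to a direct sum of `p` copies of the identity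
and `q` copies of the entrywise complex conjugation. -/
theorem real_star_ring_hom_matrix_characterisation
    (n m : ℕ) (hn : 1 ≤ n)
    (Γ : Matrix (Fin n) (Fin n) ℂ → Matrix (Fin m) (Fin m) ℂ)
    (hΓ : IsUnitalRealStarRingHom Γ) :
    ∃ (p q : ℕ), (p + q) * n = m ∧
      ∃ U ∈ Matrix.unitaryGroup (Fin m) ℂ,
        ∃ e : (Fin p ⊕ Fin q) × Fin n ≃ Fin m,
          ∀ α : Matrix (Fin n) (Fin n) ℂ,
            Γ α = U * (Matrix.reindex
                ((Equiv.prodComm (Fin n) (Fin p ⊕ Fin q)).trans e)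
                ((Equiv.prodComm (Fin n) (Fin p ⊕ Fin q)).trans e)
                (Matrix.blockDiagonal
                  (Sum.elim (fun _ : Fin p => α)
                    (fun _ : Fin q => α.map (starRingEnd ℂ))))) * Uᴴ := by
  have : Nonempty (Fin n) := ⟨⟨0, hn⟩⟩
  obtain ⟨p, q, U, hU, e, hΓU⟩ := hΓ.toStarAlgHom.exists_unitary_eq_conj_blockDiagonal
  exact ⟨p, q, by simpa using Fintype.card_congr e, U, hU, e, hΓU⟩
end
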